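/- arXiv:1706.06850 — 3 statements merged into one kernel-verified Lean document; each statement's English description precedes it below -/
import Mathlib

section
/- Let Π be a measure on (0,∞) with Π((δ,∞)) finite for all δ > 0 and Π((0,∞)) = ∞ (and ∫₀^∞ (1∧x) Π(dx) < ∞). Then for every δ > 0 with Π̄(δ) := Π((δ,∞)) > 0, (∫₀^δ x³ Π(dx))² / (∫₀^δ x² Π(dx) + δ² Π̄(δ))³ ≤ 1/(3 Π̄(δ)); in particular this ratio tends to 0 as δ → 0 since Π̄(δ) → ∞. -/
open MeasureTheory Set Filter

private lemma aux_pt_bound {δ x : ℝ} (hδ : 0 < δ) (hx : x ∈ Ioc (0:ℝ) δ) (n : ℕ) :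
    x ^ (n + 1) ≤ δ ^ n * max 1 δ * min x 1 := by
  obtain ⟨hx0, hxδ⟩ := hx
  have hxn : x ^ n ≤ δ ^ n := pow_le_pow_left₀ hx0.le hxδ n
  rcases le_total x 1 with h | h
  · rw [min_eq_left h, pow_succ]
    have h1 : (1:ℝ) ≤ max 1 δ := le_max_left _ _
    have h2 : δ ^ n * x * 1 ≤ δ ^ n * x * (1 ⊔ δ) :=
      mul_le_mul_of_nonneg_left h1 (mul_nonneg (pow_nonneg hδ.le n) hx0.le)
    nlinarith [mul_le_mul_of_nonneg_right hxn hx0.le]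
  · rw [min_eq_right h, mul_one, pow_succ]
    have h1 : δ ≤ max 1 δ := le_max_right _ _
    nlinarith [mul_le_mul hxn hxδ hx0.le (pow_nonneg hδ.le n), pow_nonneg hδ.le n]

private lemma aux_integrable (ν : Measure ℝ)
    (hlevy : ∫⁻ x in Ioi (0 : ℝ), ENNReal.ofReal (min x 1) ∂ν ≠ ⊤)
    {δ : ℝ} (hδ : 0 < δ) (n : ℕ) :
    IntegrableOn (fun x => x ^ (n + 1)) (Ioc (0:ℝ) δ) ν := by
  set C : ℝ := δ ^ n * max 1 δ with hC
  have hC0 : 0 ≤ C := by positivity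
  constructor
  · exact (measurable_id.pow_const (n+1)).aestronglyMeasurable
  · rw [hasFiniteIntegral_iff_norm]
    calc ∫⁻ x in Ioc (0:ℝ) δ, ENNReal.ofReal ‖x ^ (n+1)‖ ∂ν
        ≤ ∫⁻ x in Ioc (0:ℝ) δ, ENNReal.ofReal (C * min x 1) ∂ν := by
          apply setLIntegral_mono
          · exact ((measurable_const.mul ((measurable_id.min measurable_const)))).ennreal_ofReal
          · intro x hx
            apply ENNReal.ofReal_le_ofReal
            rw [Real.norm_eq_abs, abs_of_nonneg (pow_nonneg hx.1.le _)]
            exact aux_pt_bound hδ hx n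
      _ ≤ ∫⁻ x in Ioi (0:ℝ), ENNReal.ofReal (C * min x 1) ∂ν :=
          lintegral_mono_set Ioc_subset_Ioi_self
      _ = ENNReal.ofReal C * ∫⁻ x in Ioi (0:ℝ), ENNReal.ofReal (min x 1) ∂ν := by
          simp_rw [ENNReal.ofReal_mul hC0]
          exact lintegral_const_mul _ ((measurable_id.min measurable_const).ennreal_ofReal)
      _ < ⊤ := ENNReal.mul_lt_top ENNReal.ofReal_lt_top hlevy.lt_top

/-- For a Lévy measure `Π` on `(0,∞)` with finite tails `Π̄(δ) = Π((δ,∞))`,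
infinite total mass `Π((0,∞)) = ⊤` and `∫₀^∞ (1∧x) Π(dx) < ∞`, we have for every
`δ > 0` with `Π̄(δ) > 0` that
`(∫₀^δ x³ Π(dx))² / (∫₀^δ x² Π(dx) + δ² Π̄(δ))³ ≤ 1/(3 Π̄(δ))`,
and in particular the ratio tends to `0` as `δ → 0`. -/
theorem third_moment_ratio_bound (ν : Measure ℝ)
    (htail_fin : ∀ δ : ℝ, 0 < δ → ν (Ioi δ) ≠ ⊤)
    (hinf : ν (Ioi (0 : ℝ)) = ⊤)
    (hlevy : ∫⁻ x in Ioi (0 : ℝ), ENNReal.ofReal (min x 1) ∂ν ≠ ⊤) :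
    (∀ δ : ℝ, 0 < δ → 0 < (ν (Ioi δ)).toReal →
      (∫ x in Ioc (0 : ℝ) δ, x ^ 3 ∂ν) ^ 2 /
          ((∫ x in Ioc (0 : ℝ) δ, x ^ 2 ∂ν) + δ ^ 2 * (ν (Ioi δ)).toReal) ^ 3 ≤
        1 / (3 * (ν (Ioi δ)).toReal)) ∧
    Tendsto (fun δ : ℝ =>
        (∫ x in Ioc (0 : ℝ) δ, x ^ 3 ∂ν) ^ 2 /
          ((∫ x in Ioc (0 : ℝ) δ, x ^ 2 ∂ν) + δ ^ 2 * (ν (Ioi δ)).toReal) ^ 3)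
      (nhdsWithin 0 (Ioi 0)) (nhds 0) := by
  have hB0 : ∀ δ : ℝ, 0 < δ → 0 ≤ ∫ x in Ioc (0:ℝ) δ, x ^ 2 ∂ν := fun δ hδ =>
    setIntegral_nonneg measurableSet_Ioc (fun x hx => sq_nonneg x)
  have hA0 : ∀ δ : ℝ, 0 < δ → 0 ≤ ∫ x in Ioc (0:ℝ) δ, x ^ 3 ∂ν := fun δ hδ =>
    setIntegral_nonneg measurableSet_Ioc (fun x hx => pow_nonneg hx.1.le 3)
  have key : ∀ δ : ℝ, 0 < δ → 0 < (ν (Ioi δ)).toReal →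
      (∫ x in Ioc (0 : ℝ) δ, x ^ 3 ∂ν) ^ 2 /
          ((∫ x in Ioc (0 : ℝ) δ, x ^ 2 ∂ν) + δ ^ 2 * (ν (Ioi δ)).toReal) ^ 3 ≤
        1 / (3 * (ν (Ioi δ)).toReal) := by
    intro δ hδ hT
    set A := ∫ x in Ioc (0:ℝ) δ, x ^ 3 ∂ν with hA
    set B := ∫ x in Ioc (0:ℝ) δ, x ^ 2 ∂ν with hB
    set T := (ν (Ioi δ)).toReal with hTdef
    have hi2 : IntegrableOn (fun x => x ^ 2) (Ioc (0:ℝ) δ) ν := aux_integrable ν hlevy hδ 1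
    have hi3 : IntegrableOn (fun x => x ^ 3) (Ioc (0:ℝ) δ) ν := aux_integrable ν hlevy hδ 2
    have hAB : A ≤ δ * B := by
      have h := setIntegral_mono_on hi3 (hi2.const_mul δ) measurableSet_Ioc
        (fun x hx => by nlinarith [hx.1, hx.2, sq_nonneg x])
      rwa [integral_const_mul] at h
    have hB0' : 0 ≤ B := hB0 δ hδ
    have hA0' : 0 ≤ A := hA0 δ hδ
    have hD : 0 < (B + δ ^ 2 * T) ^ 3 := by positivity
    rw [div_le_div_iff₀ hD (by positivity)]
    have hA2 : A ^ 2 ≤ (δ * B) ^ 2 := pow_le_pow_left₀ hA0' hAB 2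
    nlinarith [mul_le_mul_of_nonneg_left hA2 (by positivity : (0:ℝ) ≤ 3 * T),
      mul_pos (mul_pos (by positivity : (0:ℝ) < δ ^ 2) hT) hT,
      pow_nonneg hB0' 3, mul_nonneg hB0' (sq_nonneg (δ ^ 2 * T)),
      mul_nonneg (mul_nonneg hB0' hB0') (mul_nonneg (sq_nonneg δ) hT.le)]
  refine ⟨key, ?_⟩
  have hTtop : Tendsto (fun δ : ℝ => (ν (Ioi δ)).toReal) (nhdsWithin 0 (Ioi 0)) atTop := by
    rw [tendsto_atTop]
    intro M
    have hUnion : (⋃ n : ℕ, Ioi (((n:ℝ)+1)⁻¹)) = Ioi (0:ℝ) := by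
      ext x
      simp only [mem_iUnion, mem_Ioi]
      constructor
      · rintro ⟨n, hn⟩
        exact lt_trans (by positivity) hn
      · intro hx
        obtain ⟨n, hn⟩ := exists_nat_one_div_lt hx
        exact ⟨n, by rwa [one_div] at hn⟩
    have hmono : Monotone (fun n : ℕ => Ioi (((n:ℝ)+1)⁻¹)) := by
      intro m n h
      apply Ioi_subset_Ioi
      gcongr
    have hsup : ν (⋃ n : ℕ, Ioi (((n:ℝ)+1)⁻¹)) = ⨆ n : ℕ, ν (Ioi (((n:ℝ)+1)⁻¹)) :=
      hmono.directed_le.measure_iUnion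
    rw [hUnion, hinf] at hsup
    have hlt : ENNReal.ofReal M < ⨆ n : ℕ, ν (Ioi (((n:ℝ)+1)⁻¹)) := by
      rw [← hsup]; exact ENNReal.ofReal_lt_top
    obtain ⟨n, hn⟩ := lt_iSup_iff.mp hlt
    filter_upwards [Ioc_mem_nhdsGT_of_mem (Set.left_mem_Ico.mpr (by positivity : (0:ℝ) < ((n:ℝ)+1)⁻¹))] with δ hδ
    have hle : ν (Ioi (((n:ℝ)+1)⁻¹)) ≤ ν (Ioi δ) := measure_mono (Ioi_subset_Ioi hδ.2)
    exact (ENNReal.ofReal_le_iff_le_toReal (htail_fin δ hδ.1)).mp (le_trans hn.le hle)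
  have hub : Tendsto (fun δ : ℝ => 1 / (3 * (ν (Ioi δ)).toReal)) (nhdsWithin 0 (Ioi 0))
      (nhds 0) := by
    simp only [one_div]
    exact tendsto_inv_atTop_zero.comp (hTtop.const_mul_atTop (by norm_num : (0:ℝ) < 3))
  refine tendsto_of_tendsto_of_tendsto_of_le_of_le' tendsto_const_nhds hub ?_ ?_
  · filter_upwards [self_mem_nhdsWithin] with δ hδ
    exact div_nonneg (sq_nonneg _)
      (pow_nonneg (add_nonneg (hB0 δ hδ) (mul_nonneg (sq_nonneg δ) ENNReal.toReal_nonneg)) 3)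
  · filter_upwards [self_mem_nhdsWithin,
      hTtop.eventually (eventually_gt_atTop (0:ℝ))] with δ hδ hT
    exact key δ hδ hT
end

section
/- Let X be a subordinator with infinite Lévy measure, Laplace exponent Φ, renewal function U(δ) = E[T_δ] where T_δ = ∫₀^∞ 1{X_t ≤ δ} dt. Then for every m ≥ 1, limsup_{δ→0} E[T_δ^m]/U(δ)^m < ∞. -/
open MeasureTheory Set Filter
open scoped ProbabilityTheory ENNReal

/-- A subordinator: a nondecreasing right-continuous real-valued process started at `0`,
with stationary independent increments, drift `drift` and Lévy measure `levy`, whose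
one-dimensional marginals are given by the Lévy–Khintchine formula. -/
structure Subordinator (Ω : Type*) [MeasureSpace Ω] where
  X : ℝ → Ω → ℝ
  drift : ℝ
  levy : Measure ℝ
  drift_nonneg : 0 ≤ drift
  levy_supp : levy (Iic 0) = 0
  levy_int : ∫⁻ x in Ioi (0 : ℝ), ENNReal.ofReal (min x 1) ∂levy ≠ ⊤
  meas : ∀ t, Measurable (X t)
  init : ∀ ω, X 0 ω = 0
  mono : ∀ ω, MonotoneOn (fun t => X t ω) (Ici 0)
  rightCont : ∀ ω, ∀ t ≥ (0 : ℝ), ContinuousWithinAt (fun s => X s ω) (Ici t) t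
  indep : ∀ s t : ℝ, 0 ≤ s → 0 ≤ t →
    ProbabilityTheory.IndepFun (X s) (fun ω => X (s + t) ω - X s ω) ℙ
  stat : ∀ s t : ℝ, 0 ≤ s → 0 ≤ t →
    Measure.map (fun ω => X (s + t) ω - X s ω) ℙ = Measure.map (X t) ℙ
  laplace : ∀ t ≥ (0 : ℝ), ∀ l ≥ (0 : ℝ),
    ∫ ω, Real.exp (-(l * X t ω)) =
      Real.exp (-(t * (drift * l + ∫ x in Ioi (0 : ℝ), (1 - Real.exp (-(l * x))) ∂levy)))

variable {Ω : Type*} [MeasureSpace Ω]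

/-- The process with `δ`-shortened jumps: every jump of size exceeding `δ` is shortened
to have size exactly `δ` (pathwise: subtract the excess of each jump over `δ`). -/
noncomputable def Subordinator.shortened (S : Subordinator Ω) (δ t : ℝ) (ω : Ω) : ℝ :=
  S.X t ω - ∑' s : Ioc (0 : ℝ) t,
    max (S.X s ω - Function.leftLim (fun u => S.X u ω) s - δ) 0

/-- `L(t,δ) = X̃_t^δ / δ`, the rescaled `δ`-shortened process. -/
noncomputable def Subordinator.L (S : Subordinator Ω) (t δ : ℝ) (ω : Ω) : ℝ :=
  S.shortened δ t ω / δ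

/-- `μ(δ) = (d + ∫₀^δ ν̄(x) dx)/δ = (d + ∫ (x∧δ) ν(dx))/δ`. -/
noncomputable def Subordinator.mu (S : Subordinator Ω) (δ : ℝ) : ℝ :=
  (S.drift + ∫ x in Ioi (0 : ℝ), min x δ ∂S.levy) / δ

/-- `v(δ) = δ⁻¹ (∫ (x∧δ)² ν(dx))^{1/2}`. -/
noncomputable def Subordinator.v (S : Subordinator Ω) (δ : ℝ) : ℝ :=
  δ⁻¹ * Real.sqrt (∫ x in Ioi (0 : ℝ), (min x δ) ^ 2 ∂S.levy)


/-- First passage time `T_δ = Leb{t ≥ 0 : X_t ≤ δ}` of a subordinator. -/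
noncomputable def Subordinator.T (S : Subordinator Ω) (δ : ℝ) (ω : Ω) : ℝ :=
  (volume {s : ℝ | 0 ≤ s ∧ S.X s ω ≤ δ}).toReal

/-- Renewal function `U(δ) = E[T_δ]`. -/
noncomputable def Subordinator.U [IsProbabilityMeasure (ℙ : Measure Ω)]
    (S : Subordinator Ω) (δ : ℝ) : ℝ :=
  ∫ ω, S.T δ ω

/-!
Chernoff's bound for `e^{-X_t/δ}` gives `P(T_δ > t) ≤ P(X_t ≤ δ) ≤ e · e^{-t Φ(1/δ)}`, so by the
layer-cake formula `E[T_δ^m] ≤ e Γ(m+1) Φ(1/δ)^{-m}`. Conversely `E[e^{-X_t/δ}] ≤ P(X_t ≤ δ) + e⁻¹`,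
so at `t = 1/(2Φ(1/δ))` the event `{X_t ≤ δ}`, on which `T_δ ≥ t`, has probability at least
`e^{-1/2} - e⁻¹`. Hence `U(δ) ≥ c / Φ(1/δ)` with `c = (e^{-1/2} - e⁻¹) / 2`, and the ratio is at
most `e Γ(m+1) / c^m`.
-/

namespace MonotoneOn

variable {f : ℝ → ℝ} {δ t : ℝ}

lemma setOf_le_subset_Icc_of_lt (hf : MonotoneOn f (Ici 0)) (ht : 0 ≤ t) (h : δ < f t) :
    {s | 0 ≤ s ∧ f s ≤ δ} ⊆ Icc 0 t := fun _ ⟨hs, hsδ⟩ =>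
  ⟨hs, le_of_not_gt fun hts => (hf ht hs hts.le).trans hsδ |>.not_gt h⟩

lemma Icc_subset_setOf_le (hf : MonotoneOn f (Ici 0)) (h : f t ≤ δ) :
    Icc 0 t ⊆ {s | 0 ≤ s ∧ f s ≤ δ} := fun _ ⟨hs, hst⟩ =>
  ⟨hs, (hf hs (hs.trans hst) hst).trans h⟩

lemma volume_setOf_le_eq_iSup_rat (hf : MonotoneOn f (Ici 0)) (δ : ℝ) :
    volume {s | 0 ≤ s ∧ f s ≤ δ} = ⨆ q : ℚ, {s | f s ≤ δ}.indicator ENNReal.ofReal (q : ℝ) := by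
  set g := ⨆ q : ℚ, {s | f s ≤ δ}.indicator ENNReal.ofReal (q : ℝ)
  refine le_antisymm ?_ (iSup_le fun q => ?_)
  · rcases eq_or_ne g ⊤ with hg | hg
    · exact hg ▸ le_top
    have hsub : {s | 0 ≤ s ∧ f s ≤ δ} ⊆ Icc 0 g.toReal := by
      refine fun s ⟨hs, hsδ⟩ => ⟨hs, le_of_not_gt fun hgs => ?_⟩
      obtain ⟨q, hgq, hqs⟩ := exists_rat_btwn hgs
      have hq : 0 ≤ (q : ℝ) := ENNReal.toReal_nonneg.trans hgq.le
      have hqg : ENNReal.ofReal q ≤ g :=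
        le_iSup_of_le q (indicator_of_mem (s := {s | f s ≤ δ}) (hf hq hs hqs.le |>.trans hsδ) _).ge
      exact ((ENNReal.ofReal_le_iff_le_toReal hg).1 hqg).not_gt hgq
    calc volume {s | 0 ≤ s ∧ f s ≤ δ} ≤ volume (Icc 0 g.toReal) := measure_mono hsub
      _ = g := by rw [Real.volume_Icc, sub_zero, ENNReal.ofReal_toReal hg]
  · by_cases hq : f q ≤ δ
    · rw [indicator_of_mem (s := {s | f s ≤ δ}) hq]
      calc ENNReal.ofReal q = volume (Icc 0 (q : ℝ)) := by rw [Real.volume_Icc, sub_zero]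
        _ ≤ _ := measure_mono (hf.Icc_subset_setOf_le hq)
    · exact (indicator_of_notMem (s := {s | f s ≤ δ}) hq _).trans_le zero_le

end MonotoneOn

lemma one_sub_exp_neg_mul_le_max_mul_min {l x : ℝ} (hx : 0 ≤ x) :
    1 - Real.exp (-(l * x)) ≤ max l 1 * min x 1 := by
  rcases le_total x 1 with hx1 | hx1
  · rw [min_eq_left hx1]
    calc 1 - Real.exp (-(l * x)) ≤ l * x := by linarith [Real.add_one_le_exp (-(l * x))]
      _ ≤ max l 1 * x := by gcongr; exact le_max_left _ _
  · rw [min_eq_right hx1, mul_one]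
    linarith [Real.exp_pos (-(l * x)), le_max_right l 1]

lemma lintegral_rpow_le_of_measure_lt_le {α : Type*} [MeasurableSpace α] {μ : Measure α}
    {f : α → ℝ} (hf_nonneg : 0 ≤ᵐ[μ] f) (hf : AEMeasurable f μ) {C r p : ℝ} (hC : 0 ≤ C)
    (hr : 0 < r) (hp : 0 < p)
    (htail : ∀ t, 0 < t → μ {a | t < f a} ≤ ENNReal.ofReal (C * Real.exp (-(r * t)))) :
    ∫⁻ a, ENNReal.ofReal (f a ^ p) ∂μ ≤ ENNReal.ofReal (C * Real.Gamma (p + 1) * r⁻¹ ^ p) := by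
  have hint : IntegrableOn (fun t : ℝ => C * (t ^ (p - 1) * Real.exp (-(r * t)))) (Ioi 0) := by
    have h := integrableOn_rpow_mul_exp_neg_mul_rpow (s := p - 1) (by linarith) one_pos hr
    simp only [Real.rpow_one, neg_mul] at h
    exact h.const_mul C
  rw [lintegral_rpow_eq_lintegral_meas_lt_mul μ hf_nonneg hf hp]
  calc ENNReal.ofReal p * ∫⁻ t in Ioi 0, μ {a | t < f a} * ENNReal.ofReal (t ^ (p - 1))
      ≤ ENNReal.ofReal p *
          ∫⁻ t in Ioi 0, ENNReal.ofReal (C * (t ^ (p - 1) * Real.exp (-(r * t)))) := by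
        refine mul_le_mul_right
          (setLIntegral_mono' (measurableSet_Ioi (a := (0 : ℝ))) fun t ht => ?_) _
        rw [show C * (t ^ (p - 1) * Real.exp (-(r * t))) = C * Real.exp (-(r * t)) * t ^ (p - 1)
          by ring, ENNReal.ofReal_mul (by positivity)]
        exact mul_le_mul_left (htail t ht) _
    _ = ENNReal.ofReal (p * (C * (r⁻¹ ^ p * Real.Gamma p))) := by
        rw [← ofReal_integral_eq_lintegral_ofReal hint, integral_const_mul,
          Real.integral_rpow_mul_exp_neg_mul_Ioi hp hr, one_div, ENNReal.ofReal_mul hp.le]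
        filter_upwards [ae_restrict_mem measurableSet_Ioi] with t ht
        have : (0 : ℝ) < t := ht
        positivity
    _ = ENNReal.ofReal (C * Real.Gamma (p + 1) * r⁻¹ ^ p) := by
        rw [Real.Gamma_add_one hp.ne']
        ring_nf

open ProbabilityTheory

namespace Subordinator

noncomputable def laplaceExponent (S : Subordinator Ω) (l : ℝ) : ℝ :=
  S.drift * l + ∫ x in Ioi (0 : ℝ), (1 - Real.exp (-(l * x))) ∂S.levy

lemma X_nonneg (S : Subordinator Ω) {t : ℝ} (ht : 0 ≤ t) (ω : Ω) : 0 ≤ S.X t ω := by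
  simpa [S.init ω] using S.mono ω self_mem_Ici ht ht

lemma integrableOn_min_one (S : Subordinator Ω) :
    IntegrableOn (fun x => min x 1) (Ioi 0) S.levy := by
  refine ⟨(measurable_id.min measurable_const).aestronglyMeasurable, ?_⟩
  rw [hasFiniteIntegral_iff_ofReal]
  · exact S.levy_int.lt_top
  · filter_upwards [ae_restrict_mem measurableSet_Ioi] with x hx
    exact le_min hx.le zero_le_one

lemma integrableOn_one_sub_exp_neg_mul (S : Subordinator Ω) {l : ℝ} (hl : 0 ≤ l) :
    IntegrableOn (fun x => 1 - Real.exp (-(l * x))) (Ioi 0) S.levy := by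
  refine (S.integrableOn_min_one.const_mul (max l 1)).mono' (by fun_prop) ?_
  filter_upwards [ae_restrict_mem measurableSet_Ioi] with x hx
  have hexp : Real.exp (-(l * x)) ≤ 1 :=
    Real.exp_le_one_iff.2 (neg_nonpos.2 (mul_nonneg hl hx.le))
  rw [Real.norm_of_nonneg (sub_nonneg.2 hexp)]
  exact one_sub_exp_neg_mul_le_max_mul_min hx.le

lemma laplaceExponent_pos (S : Subordinator Ω) (hinf : S.levy (Ioi 0) = ⊤) {l : ℝ}
    (hl : 0 < l) : 0 < S.laplaceExponent l := by
  have hsupport : Ioi 0 ⊆ Function.support fun x => 1 - Real.exp (-(l * x)) :=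
    fun x hx => sub_ne_zero.2 (Real.exp_lt_one_iff.2 (by nlinarith [mul_pos hl hx])).ne'
  have hnonneg : 0 ≤ᵐ[S.levy.restrict (Ioi 0)] fun x => 1 - Real.exp (-(l * x)) := by
    filter_upwards [ae_restrict_mem measurableSet_Ioi] with x hx
    exact sub_nonneg.2 (Real.exp_le_one_iff.2 (by nlinarith [mul_pos hl hx]))
  have hjumps : 0 < ∫ x in Ioi (0 : ℝ), (1 - Real.exp (-(l * x))) ∂S.levy := by
    rw [setIntegral_pos_iff_support_of_nonneg_ae hnonneg
      (S.integrableOn_one_sub_exp_neg_mul hl.le), inter_eq_right.2 hsupport, hinf]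
    exact ENNReal.zero_lt_top
  exact add_pos_of_nonneg_of_pos (mul_nonneg S.drift_nonneg hl.le) hjumps

-- `S.T δ` is its `toReal`, hence `0` wherever the occupation time is infinite.
noncomputable def occupationTime (S : Subordinator Ω) (δ : ℝ) (ω : Ω) : ℝ≥0∞ :=
  volume {s | 0 ≤ s ∧ S.X s ω ≤ δ}

lemma T_nonneg (S : Subordinator Ω) (δ : ℝ) (ω : Ω) : 0 ≤ S.T δ ω :=
  ENNReal.toReal_nonneg

lemma measurable_occupationTime (S : Subordinator Ω) (δ : ℝ) :
    Measurable (S.occupationTime δ) := by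
  have h : S.occupationTime δ = fun ω =>
      ⨆ q : ℚ, {ω | S.X q ω ≤ δ}.indicator (fun _ => ENNReal.ofReal q) ω :=
    funext fun ω => (S.mono ω).volume_setOf_le_eq_iSup_rat δ
  rw [h]
  exact .iSup fun q => measurable_const.indicator (measurableSet_le (S.meas q) measurable_const)

lemma measurable_T (S : Subordinator Ω) (δ : ℝ) : Measurable (S.T δ) :=
  (S.measurable_occupationTime δ).ennreal_toReal

lemma X_le_of_ofReal_lt_occupationTime (S : Subordinator Ω) {δ t : ℝ} (ht : 0 ≤ t) {ω : Ω}
    (h : ENNReal.ofReal t < S.occupationTime δ ω) : S.X t ω ≤ δ := by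
  refine le_of_not_gt fun hδ => h.not_ge ?_
  calc S.occupationTime δ ω ≤ volume (Icc 0 t) :=
        measure_mono ((S.mono ω).setOf_le_subset_Icc_of_lt ht hδ)
    _ = ENNReal.ofReal t := by rw [Real.volume_Icc, sub_zero]

lemma X_le_of_lt_T (S : Subordinator Ω) {δ t : ℝ} (ht : 0 ≤ t) {ω : Ω} (h : t < S.T δ ω) :
    S.X t ω ≤ δ :=
  S.X_le_of_ofReal_lt_occupationTime ht ((ENNReal.ofReal_lt_ofReal_iff_of_nonneg ht).2 h
    |>.trans_le ENNReal.ofReal_toReal_le)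

lemma le_T_of_X_le (S : Subordinator Ω) {δ t : ℝ} {ω : Ω}
    (hfin : S.occupationTime δ ω ≠ ⊤) (h : S.X t ω ≤ δ) : t ≤ S.T δ ω := by
  refine (ENNReal.ofReal_le_iff_le_toReal hfin).1 ?_
  calc ENNReal.ofReal t = volume (Icc 0 t) := by rw [Real.volume_Icc, sub_zero]
    _ ≤ S.occupationTime δ ω := measure_mono ((S.mono ω).Icc_subset_setOf_le h)

lemma mgf_X_neg (S : Subordinator Ω) {t l : ℝ} (ht : 0 ≤ t) (hl : 0 ≤ l) :
    mgf (S.X t) ℙ (-l) = Real.exp (-(t * S.laplaceExponent l)) := by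
  simp only [mgf, neg_mul]
  exact S.laplace t ht l hl

variable [IsProbabilityMeasure (ℙ : Measure Ω)]

lemma integrable_exp_neg_mul_X (S : Subordinator Ω) {t l : ℝ} (ht : 0 ≤ t) (hl : 0 ≤ l) :
    Integrable (fun ω => Real.exp (-l * S.X t ω)) ℙ := by
  refine (integrable_const 1).mono' (by have := S.meas t; fun_prop) (ae_of_all _ fun ω => ?_)
  rw [Real.norm_of_nonneg (Real.exp_pos _).le, Real.exp_le_one_iff, neg_mul]
  exact neg_nonpos.2 (mul_nonneg hl (S.X_nonneg ht ω))

lemma measureReal_X_le_le (S : Subordinator Ω) {δ t : ℝ} (hδ : 0 < δ) (ht : 0 ≤ t) :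
    (ℙ : Measure Ω).real {ω | S.X t ω ≤ δ} ≤
      Real.exp 1 * Real.exp (-(t * S.laplaceExponent δ⁻¹)) := by
  have h := measure_le_le_exp_mul_mgf δ (neg_nonpos.2 (inv_nonneg.2 hδ.le))
    (S.integrable_exp_neg_mul_X ht (inv_nonneg.2 hδ.le))
  rwa [S.mgf_X_neg ht (inv_nonneg.2 hδ.le), neg_neg, inv_mul_cancel₀ hδ.ne'] at h

lemma exp_neg_sub_le_measureReal_X_le (S : Subordinator Ω) {δ t : ℝ} (hδ : 0 < δ)
    (ht : 0 ≤ t) :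
    Real.exp (-(t * S.laplaceExponent δ⁻¹)) - Real.exp (-1) ≤
      (ℙ : Measure Ω).real {ω | S.X t ω ≤ δ} := by
  set A := {ω | S.X t ω ≤ δ}
  have hA : MeasurableSet A := measurableSet_le (S.meas t) measurable_const
  have hpointwise : ∀ ω, Real.exp (-δ⁻¹ * S.X t ω) ≤ Real.exp (-1) + A.indicator 1 ω := by
    intro ω
    by_cases hω : ω ∈ A
    · rw [indicator_of_mem hω, Pi.one_apply, neg_mul]
      linarith [Real.exp_pos (-1), Real.exp_le_one_iff.2
        (neg_nonpos.2 (mul_nonneg (inv_nonneg.2 hδ.le) (S.X_nonneg ht ω)))]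
    · rw [indicator_of_notMem hω, add_zero, Real.exp_le_exp, neg_mul, neg_le_neg_iff,
        ← inv_mul_cancel₀ hδ.ne']
      exact mul_le_mul_of_nonneg_left (not_le.1 hω).le (inv_nonneg.2 hδ.le)
  have h := integral_mono (S.integrable_exp_neg_mul_X ht (inv_nonneg.2 hδ.le))
    ((integrable_const _).add ((integrable_const 1).indicator hA)) hpointwise
  simp only [Pi.add_apply] at h
  rw [integral_add (integrable_const _) ((integrable_const 1).indicator hA),
    integral_indicator_one hA, integral_const, probReal_univ, one_smul] at h
  rw [← S.mgf_X_neg ht (inv_nonneg.2 hδ.le)]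
  exact sub_le_iff_le_add'.2 h

lemma measure_occupationTime_eq_top (S : Subordinator Ω) (hinf : S.levy (Ioi 0) = ⊤) {δ : ℝ}
    (hδ : 0 < δ) : (ℙ : Measure Ω) {ω | S.occupationTime δ ω = ⊤} = 0 := by
  have hΦ := S.laplaceExponent_pos hinf (inv_pos.2 hδ)
  have hbound : ∀ n : ℕ, (ℙ : Measure Ω).real {ω | S.occupationTime δ ω = ⊤} ≤
      Real.exp 1 * Real.exp (-(n * S.laplaceExponent δ⁻¹)) := fun n =>
    (measureReal_mono fun ω hω => S.X_le_of_ofReal_lt_occupationTime n.cast_nonneg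
      (by rw [show S.occupationTime δ ω = ⊤ from hω]; exact ENNReal.ofReal_lt_top)).trans
      (S.measureReal_X_le_le hδ n.cast_nonneg)
  have hlim : Tendsto (fun n : ℕ => Real.exp 1 * Real.exp (-(n * S.laplaceExponent δ⁻¹)))
      atTop (nhds 0) := by
    simpa using (Real.tendsto_exp_atBot.comp (tendsto_neg_atTop_atBot.comp
      (tendsto_natCast_atTop_atTop.atTop_mul_const hΦ))).const_mul (Real.exp 1)
  exact (measureReal_eq_zero_iff).1 (le_antisymm (ge_of_tendsto' hlim hbound) measureReal_nonneg)

lemma measure_lt_T_le (S : Subordinator Ω) {δ t : ℝ} (hδ : 0 < δ) (ht : 0 ≤ t) :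
    (ℙ : Measure Ω) {ω | t < S.T δ ω} ≤
      ENNReal.ofReal (Real.exp 1 * Real.exp (-(S.laplaceExponent δ⁻¹ * t))) := by
  rw [mul_comm (S.laplaceExponent δ⁻¹)]
  refine (measure_mono fun ω => S.X_le_of_lt_T ht).trans ?_
  exact (ENNReal.le_ofReal_iff_toReal_le (measure_ne_top _ _) (by positivity)).2
    (S.measureReal_X_le_le hδ ht)

lemma lintegral_T_rpow_le (S : Subordinator Ω) (hinf : S.levy (Ioi 0) = ⊤) {δ p : ℝ}
    (hδ : 0 < δ) (hp : 0 < p) :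
    ∫⁻ ω, ENNReal.ofReal (S.T δ ω ^ p) ≤
      ENNReal.ofReal (Real.exp 1 * Real.Gamma (p + 1) * (S.laplaceExponent δ⁻¹)⁻¹ ^ p) :=
  lintegral_rpow_le_of_measure_lt_le (ae_of_all _ (S.T_nonneg δ))
    (S.measurable_T δ).aemeasurable (Real.exp_pos 1).le
    (S.laplaceExponent_pos hinf (inv_pos.2 hδ)) hp fun _ ht => S.measure_lt_T_le hδ ht.le

lemma integral_T_rpow_le (S : Subordinator Ω) (hinf : S.levy (Ioi 0) = ⊤) {δ p : ℝ}
    (hδ : 0 < δ) (hp : 0 < p) :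
    ∫ ω, S.T δ ω ^ p ≤ Real.exp 1 * Real.Gamma (p + 1) * (S.laplaceExponent δ⁻¹)⁻¹ ^ p := by
  have hΦ := S.laplaceExponent_pos hinf (inv_pos.2 hδ)
  have hΓ := Real.Gamma_pos_of_pos (show 0 < p + 1 by linarith)
  rw [integral_eq_lintegral_of_nonneg_ae (ae_of_all _ fun ω => Real.rpow_nonneg (S.T_nonneg δ ω) p)
    ((S.measurable_T δ).pow_const p).aestronglyMeasurable]
  exact ENNReal.toReal_le_of_le_ofReal (by positivity) (S.lintegral_T_rpow_le hinf hδ hp)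

lemma integrable_T (S : Subordinator Ω) (hinf : S.levy (Ioi 0) = ⊤) {δ : ℝ} (hδ : 0 < δ) :
    Integrable (S.T δ) ℙ := by
  refine ⟨(S.measurable_T δ).aestronglyMeasurable, ?_⟩
  rw [hasFiniteIntegral_iff_ofReal (ae_of_all _ (S.T_nonneg δ))]
  simpa only [Real.rpow_one] using (S.lintegral_T_rpow_le hinf hδ one_pos).trans_lt
    ENNReal.ofReal_lt_top

lemma U_ge (S : Subordinator Ω) (hinf : S.levy (Ioi 0) = ⊤) {δ : ℝ} (hδ : 0 < δ) :
    (Real.exp (-2⁻¹) - Real.exp (-1)) / 2 * (S.laplaceExponent δ⁻¹)⁻¹ ≤ S.U δ := by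
  have hΦ := S.laplaceExponent_pos hinf (inv_pos.2 hδ)
  set t₀ := (2 * S.laplaceExponent δ⁻¹)⁻¹
  have ht₀ : 0 < t₀ := by positivity
  have hP : Real.exp (-2⁻¹) - Real.exp (-1) ≤ (ℙ : Measure Ω).real {ω | S.X t₀ ω ≤ δ} := by
    have h := S.exp_neg_sub_le_measureReal_X_le hδ ht₀.le
    rwa [show t₀ * S.laplaceExponent δ⁻¹ = 2⁻¹ by
      simp only [t₀]; rw [mul_inv, mul_assoc, inv_mul_cancel₀ hΦ.ne', mul_one]] at h
  have hsub : {ω | S.X t₀ ω ≤ δ} ≤ᵐ[ℙ] {ω | t₀ ≤ S.T δ ω} := by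
    filter_upwards [measure_eq_zero_iff_ae_notMem.1 (S.measure_occupationTime_eq_top hinf hδ)]
      with ω hfin hX
    exact S.le_T_of_X_le hfin hX
  calc (Real.exp (-2⁻¹) - Real.exp (-1)) / 2 * (S.laplaceExponent δ⁻¹)⁻¹
      = t₀ * (Real.exp (-2⁻¹) - Real.exp (-1)) := by simp only [t₀, mul_inv]; ring
    _ ≤ t₀ * (ℙ : Measure Ω).real {ω | t₀ ≤ S.T δ ω} := by
        gcongr
        exact hP.trans (ENNReal.toReal_mono (measure_ne_top _ _) (measure_mono_ae hsub))
    _ ≤ S.U δ := mul_meas_ge_le_integral_of_nonneg (ae_of_all _ (S.T_nonneg δ))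
        (S.integrable_T hinf hδ) t₀

end Subordinator

/-- For every subordinator with infinite Lévy measure and every `m ≥ 1`,
`limsup_{δ→0} E[T_δ^m]/U(δ)^m < ∞`, i.e. the ratio is eventually bounded as `δ → 0`. -/
theorem moment_ratio_bounded [IsProbabilityMeasure (ℙ : Measure Ω)]
    (S : Subordinator Ω) (hinf : S.levy (Ioi (0 : ℝ)) = ⊤) :
    ∀ m : ℝ, 1 ≤ m →
      IsBoundedUnder (· ≤ ·) (nhdsWithin (0 : ℝ) (Ioi 0))
        (fun δ : ℝ => (∫ ω, S.T δ ω ^ m) / S.U δ ^ m) := by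
  intro m hm
  set c := (Real.exp (-2⁻¹) - Real.exp (-1)) / 2
  have hc : 0 < c := half_pos (sub_pos.2 (Real.exp_lt_exp.2 (by norm_num)))
  refine ⟨Real.exp 1 * Real.Gamma (m + 1) / c ^ m,
    eventually_map.2 (eventually_mem_nhdsWithin.mono fun δ hδ => ?_)⟩
  have hΦ := S.laplaceExponent_pos hinf (inv_pos.2 hδ)
  set Φ := S.laplaceExponent δ⁻¹
  calc (∫ ω, S.T δ ω ^ m) / S.U δ ^ m
      ≤ Real.exp 1 * Real.Gamma (m + 1) * Φ⁻¹ ^ m / (c * Φ⁻¹) ^ m :=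
        div_le_div₀ (by positivity) (S.integral_T_rpow_le hinf hδ (by linarith))
          (by positivity) (Real.rpow_le_rpow (by positivity) (S.U_ge hinf hδ) (by linarith))
    _ = Real.exp 1 * Real.Gamma (m + 1) / c ^ m := by
        rw [Real.mul_rpow hc.le (inv_pos.2 hΦ).le]
        field_simp
end

section
/- Let Π be a Lévy measure with Π((0,∞)) = ∞, set v(δ)² = δ^{−2} ∫₀^∞ (x∧δ)² Π(dx) and μ(δ) = δ^{−1} ∫₀^∞ (x∧δ) Π(dx). If for every λ ≥ 0, ∫₀^∞ (x∧δ)³/(δ³ v(δ)³) Π(dx) → 0 as δ → 0, then for every λ ≥ 0, λμ(δ)/v(δ) − Φ̃^δ(λ/(δ v(δ))) → λ²/2 as δ → 0, where Φ̃^δ(u) = ∫₀^∞ (1 − e^{−u(x∧δ)}) Π(dx). -/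
open MeasureTheory Set Filter Real

/-!
Write `f = x ∧ δ` and `u = λ / (δ v(δ))`. Since `λ μ(δ) / v(δ) = u ∫ f dΠ`, the quantity in question
is `∫ (u f - 1 + e^{-u f}) dΠ`, and the pointwise bounds `y²/2 - y³/6 ≤ y - 1 + e^{-y} ≤ y²/2`
squeeze it between `λ²/2 - (λ³/6) ∫ f³ / (δ v(δ))³` and `λ²/2`, because `u² ∫ f² dΠ = λ²`.
The lower bound tends to `λ²/2` by the Lyapunov condition.
-/

lemma sub_one_add_exp_neg_le_sq_div_two {y : ℝ} (hy : 0 ≤ y) : y - 1 + exp (-y) ≤ y ^ 2 / 2 := by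
  have h := quadratic_le_exp_of_nonneg hy
  have h1 : exp (-y) * exp y = 1 := by rw [← exp_add, neg_add_cancel, exp_zero]
  nlinarith [exp_pos (-y), sq_nonneg (y * y)]

lemma sq_div_two_sub_cube_div_six_le_sub_one_add_exp_neg {y : ℝ} (hy : 0 ≤ y) :
    y ^ 2 / 2 - y ^ 3 / 6 ≤ y - 1 + exp (-y) := by
  let f (t : ℝ) : ℝ := t - 1 + exp (-t) - (t ^ 2 / 2 - t ^ 3 / 6)
  have hderiv (t : ℝ) : deriv f t = t ^ 2 / 2 - (t - 1 + exp (-t)) := by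
    simp (disch := fun_prop) [f]
    ring
  have hmono : MonotoneOn f (Ici 0) := by
    refine monotoneOn_of_deriv_nonneg (convex_Ici 0) (by fun_prop) (by fun_prop) fun t ht => ?_
    rw [interior_Ici] at ht
    rw [hderiv, sub_nonneg]
    exact sub_one_add_exp_neg_le_sq_div_two ht.le
  have := hmono self_mem_Ici hy hy
  norm_num [f] at this
  linarith

section ExpRemainder

variable {α : Type*} [MeasurableSpace α] {m : Measure α} {f : α → ℝ} {u : ℝ}

lemma integrable_one_sub_exp_neg_mul (hu : 0 ≤ u) (hf : Integrable f m) (hf0 : 0 ≤ᵐ[m] f) :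
    Integrable (fun x => 1 - exp (-(u * f x))) m := by
  refine (hf.const_mul u).mono' (by fun_prop) ?_
  filter_upwards [hf0] with x hx
  have hy : 0 ≤ u * f x := mul_nonneg hu hx
  rw [norm_of_nonneg (sub_nonneg.2 (exp_le_one_iff.2 (neg_nonpos.2 hy)))]
  linarith [one_sub_le_exp_neg (u * f x)]

lemma integral_mul_sub_one_sub_exp_neg_le (hu : 0 ≤ u) (hf : Integrable f m) (hf0 : 0 ≤ᵐ[m] f)
    (hf2 : Integrable (fun x => f x ^ 2) m) :
    ∫ x, (u * f x - (1 - exp (-(u * f x)))) ∂m ≤ u ^ 2 / 2 * ∫ x, f x ^ 2 ∂m := by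
  rw [← integral_const_mul]
  refine integral_mono_ae ((hf.const_mul u).sub (integrable_one_sub_exp_neg_mul hu hf hf0))
    (hf2.const_mul _) ?_
  filter_upwards [hf0] with x hx
  have := sub_one_add_exp_neg_le_sq_div_two (mul_nonneg hu hx)
  linear_combination this

lemma le_integral_mul_sub_one_sub_exp_neg (hu : 0 ≤ u) (hf : Integrable f m) (hf0 : 0 ≤ᵐ[m] f)
    (hf2 : Integrable (fun x => f x ^ 2) m) (hf3 : Integrable (fun x => f x ^ 3) m) :
    u ^ 2 / 2 * ∫ x, f x ^ 2 ∂m - u ^ 3 / 6 * ∫ x, f x ^ 3 ∂m ≤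
      ∫ x, (u * f x - (1 - exp (-(u * f x)))) ∂m := by
  rw [← integral_const_mul, ← integral_const_mul,
    ← integral_sub (hf2.const_mul _) (hf3.const_mul _)]
  refine integral_mono_ae ((hf2.const_mul _).sub (hf3.const_mul _))
    ((hf.const_mul u).sub (integrable_one_sub_exp_neg_mul hu hf hf0)) ?_
  filter_upwards [hf0] with x hx
  have := sq_div_two_sub_cube_div_six_le_sub_one_add_exp_neg (mul_nonneg hu hx)
  linear_combination this

end ExpRemainder

section Truncation

variable {ν : Measure ℝ} {δ : ℝ}

lemma integrableOn_min_Ioi_of_lintegral_ne_top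
    (hlevy : ∫⁻ x in Ioi (0 : ℝ), ENNReal.ofReal (min x 1) ∂ν ≠ ⊤) (hδ : 0 ≤ δ) :
    IntegrableOn (fun x => min x δ) (Ioi 0) ν := by
  have h1 : IntegrableOn (fun x => min x 1) (Ioi 0) ν :=
    ⟨by fun_prop, (hasFiniteIntegral_iff_ofReal (ae_restrict_of_forall_mem measurableSet_Ioi
      fun x hx => le_min (le_of_lt hx) zero_le_one)).2 hlevy.lt_top⟩
  refine (h1.const_mul (max δ 1)).mono' (by fun_prop)
    (ae_restrict_of_forall_mem measurableSet_Ioi fun x hx => ?_)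
  rw [norm_of_nonneg (le_min (le_of_lt hx) hδ)]
  rcases le_total x 1 with h | h
  · rw [min_eq_left h]
    exact (min_le_left x δ).trans (le_mul_of_one_le_left (le_of_lt hx) (le_max_right δ 1))
  · rw [min_eq_right h, mul_one]
    exact (min_le_right x δ).trans (le_max_left δ 1)

lemma integrableOn_min_Ioi_pow_succ
    (hlevy : ∫⁻ x in Ioi (0 : ℝ), ENNReal.ofReal (min x 1) ∂ν ≠ ⊤) (hδ : 0 ≤ δ) (n : ℕ) :
    IntegrableOn (fun x => min x δ ^ (n + 1)) (Ioi 0) ν := by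
  simp_rw [pow_succ]
  refine (integrableOn_min_Ioi_of_lintegral_ne_top hlevy hδ).bdd_mul (c := δ ^ n) (by fun_prop)
    (ae_restrict_of_forall_mem measurableSet_Ioi fun x hx => ?_)
  rw [norm_pow, norm_of_nonneg (le_min (le_of_lt hx) hδ)]
  exact pow_le_pow_left₀ (le_min (le_of_lt hx) hδ) (min_le_right x δ) n

lemma setIntegral_min_Ioi_sq_pos (hpos : ν (Ioi 0) ≠ 0)
    (hlevy : ∫⁻ x in Ioi (0 : ℝ), ENNReal.ofReal (min x 1) ∂ν ≠ ⊤) (hδ : 0 < δ) :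
    0 < ∫ x in Ioi (0 : ℝ), min x δ ^ 2 ∂ν := by
  rw [setIntegral_pos_iff_support_of_nonneg_ae (ae_of_all _ fun x => sq_nonneg _)
    (integrableOn_min_Ioi_pow_succ hlevy hδ.le 1)]
  have hsupp : Ioi (0 : ℝ) ⊆ Function.support (fun x => min x δ ^ 2) ∩ Ioi 0 :=
    fun x hx => ⟨pow_ne_zero 2 (lt_min hx hδ).ne', hx⟩
  exact (pos_iff_ne_zero.2 hpos).trans_le (measure_mono hsupp)

end Truncation

lemma laplace_exponent_truncated_bounds {ν : Measure ℝ} (hpos : ν (Ioi 0) ≠ 0)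
    (hlevy : ∫⁻ x in Ioi (0 : ℝ), ENNReal.ofReal (min x 1) ∂ν ≠ ⊤) {δ v μ lam : ℝ} (hδ : 0 < δ)
    (hv : v = δ⁻¹ * sqrt (∫ x in Ioi (0 : ℝ), min x δ ^ 2 ∂ν))
    (hμ : μ = δ⁻¹ * ∫ x in Ioi (0 : ℝ), min x δ ∂ν) (hlam : 0 ≤ lam) :
    lam ^ 2 / 2 - lam ^ 3 / 6 * ((∫ x in Ioi (0 : ℝ), min x δ ^ 3 ∂ν) / (δ ^ 3 * v ^ 3)) ≤
        lam * μ / v - ∫ x in Ioi (0 : ℝ), (1 - exp (-(lam / (δ * v) * min x δ))) ∂ν ∧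
      lam * μ / v - ∫ x in Ioi (0 : ℝ), (1 - exp (-(lam / (δ * v) * min x δ))) ∂ν ≤
        lam ^ 2 / 2 := by
  set S₂ := ∫ x in Ioi (0 : ℝ), min x δ ^ 2 ∂ν
  have hS₂ : 0 < S₂ := setIntegral_min_Ioi_sq_pos hpos hlevy hδ
  have hsq : (δ * v) ^ 2 = S₂ := by
    rw [hv, ← mul_assoc, mul_inv_cancel₀ hδ.ne', one_mul, sq_sqrt hS₂.le]
  set u := lam / (δ * v)
  have hu : 0 ≤ u := div_nonneg hlam (by rw [hv]; positivity)
  have hu₂ : u ^ 2 * S₂ = lam ^ 2 := by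
    rw [div_pow, hsq, div_mul_cancel₀ _ hS₂.ne']
  have hf := integrableOn_min_Ioi_of_lintegral_ne_top hlevy hδ.le
  have hf0 : 0 ≤ᵐ[ν.restrict (Ioi 0)] fun x => min x δ :=
    ae_restrict_of_forall_mem measurableSet_Ioi fun x hx => le_min (le_of_lt hx) hδ.le
  have hf2 : IntegrableOn (fun x => min x δ ^ 2) (Ioi 0) ν :=
    integrableOn_min_Ioi_pow_succ hlevy hδ.le 1
  have hf3 : IntegrableOn (fun x => min x δ ^ 3) (Ioi 0) ν :=
    integrableOn_min_Ioi_pow_succ hlevy hδ.le 2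
  have hrem : lam * μ / v - ∫ x in Ioi (0 : ℝ), (1 - exp (-(u * min x δ))) ∂ν =
      ∫ x in Ioi (0 : ℝ), (u * min x δ - (1 - exp (-(u * min x δ)))) ∂ν := by
    rw [integral_sub (hf.const_mul u) (integrable_one_sub_exp_neg_mul hu hf hf0),
      integral_const_mul, hμ]
    ring
  rw [hrem]
  constructor
  · refine le_trans (le_of_eq ?_) (le_integral_mul_sub_one_sub_exp_neg hu hf hf0 hf2 hf3)
    linear_combination -hu₂ / 2
  · refine (integral_mul_sub_one_sub_exp_neg_le hu hf hf0 hf2).trans (le_of_eq ?_)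
    linear_combination hu₂ / 2

theorem laplace_transform_clt_limit_general (ν : Measure ℝ)
    (hinf : ν (Ioi (0 : ℝ)) = ⊤)
    (hlevy : ∫⁻ x in Ioi (0 : ℝ), ENNReal.ofReal (min x 1) ∂ν ≠ ⊤)
    (v μ : ℝ → ℝ)
    (hv : ∀ δ : ℝ, 0 < δ →
      v δ = δ⁻¹ * Real.sqrt (∫ x in Ioi (0 : ℝ), (min x δ) ^ 2 ∂ν))
    (hμ : ∀ δ : ℝ, 0 < δ → μ δ = δ⁻¹ * ∫ x in Ioi (0 : ℝ), min x δ ∂ν)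
    (hlyap : Tendsto
      (fun δ : ℝ => (∫ x in Ioi (0 : ℝ), (min x δ) ^ 3 ∂ν) / (δ ^ 3 * (v δ) ^ 3))
      (nhdsWithin 0 (Ioi 0)) (nhds 0)) :
    ∀ lam : ℝ, 0 ≤ lam →
      Tendsto (fun δ : ℝ =>
          lam * μ δ / v δ -
            ∫ x in Ioi (0 : ℝ), (1 - Real.exp (-(lam / (δ * v δ) * min x δ))) ∂ν)
        (nhdsWithin 0 (Ioi 0)) (nhds (lam ^ 2 / 2)) := by
  intro lam hlam
  have hbounds : ∀ᶠ δ : ℝ in nhdsWithin 0 (Ioi 0), _ :=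
    eventually_nhdsWithin_of_forall fun δ hδ =>
      laplace_exponent_truncated_bounds (hinf ▸ ENNReal.top_ne_zero) hlevy hδ (hv δ hδ) (hμ δ hδ)
        hlam
  have hlower : Tendsto (fun δ => lam ^ 2 / 2 - lam ^ 3 / 6 *
      ((∫ x in Ioi (0 : ℝ), (min x δ) ^ 3 ∂ν) / (δ ^ 3 * (v δ) ^ 3)))
      (nhdsWithin 0 (Ioi 0)) (nhds (lam ^ 2 / 2)) := by
    simpa using tendsto_const_nhds.sub (hlyap.const_mul (lam ^ 3 / 6))
  exact tendsto_of_tendsto_of_tendsto_of_le_of_le' hlower tendsto_const_nhds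
    (hbounds.mono fun _ h => h.1) (hbounds.mono fun _ h => h.2)

/-- Convergence of Laplace transforms for the CLT of the δ-shortened process: with
`v(δ)² = δ⁻² ∫ (x∧δ)² ν(dx)`, `μ(δ) = δ⁻¹ ∫ (x∧δ) ν(dx)` and
`Φ̃^δ(u) = ∫ (1 − e^{−u(x∧δ)}) ν(dx)`, if the Lyapunov ratio
`∫ (x∧δ)³/(δ³ v(δ)³) ν(dx) → 0` as `δ → 0`, then for every `λ ≥ 0`,
`λ μ(δ)/v(δ) − Φ̃^δ(λ/(δ v(δ))) → λ²/2` as `δ → 0`. -/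
theorem laplace_transform_clt_limit (ν : Measure ℝ)
    (hsupp : ν (Iic (0 : ℝ)) = 0)
    (hinf : ν (Ioi (0 : ℝ)) = ⊤)
    (hlevy : ∫⁻ x in Ioi (0 : ℝ), ENNReal.ofReal (min x 1) ∂ν ≠ ⊤)
    (v μ : ℝ → ℝ)
    (hv : ∀ δ : ℝ, 0 < δ →
      v δ = δ⁻¹ * Real.sqrt (∫ x in Ioi (0 : ℝ), (min x δ) ^ 2 ∂ν))
    (hμ : ∀ δ : ℝ, 0 < δ → μ δ = δ⁻¹ * ∫ x in Ioi (0 : ℝ), min x δ ∂ν)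
    (hlyap : Tendsto
      (fun δ : ℝ => (∫ x in Ioi (0 : ℝ), (min x δ) ^ 3 ∂ν) / (δ ^ 3 * (v δ) ^ 3))
      (nhdsWithin 0 (Ioi 0)) (nhds 0)) :
    ∀ lam : ℝ, 0 ≤ lam →
      Tendsto (fun δ : ℝ =>
          lam * μ δ / v δ -
            ∫ x in Ioi (0 : ℝ), (1 - Real.exp (-(lam / (δ * v δ) * min x δ))) ∂ν)
        (nhdsWithin 0 (Ioi 0)) (nhds (lam ^ 2 / 2)) :=
  laplace_transform_clt_limit_general ν hinf hlevy v μ hv hμ hlyap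
end
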